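/- arXiv:2502.05981 — 4 statements merged into one kernel-verified Lean document; each statement's English description precedes it below -/
import Mathlib

section
/- Let N be a natural number, d : Fin N → ℕ a family of positive dimensions, and C : (Π i : Fin N, Fin (d i)) → ℝ a cost function with a unique global minimizer X, i.e. C X < C x for all x ≠ X. Then there exists τ₀ ∈ ℝ such that for all τ ≥ τ₀, for every k : Fin N and every j : Fin (d k) with j ≠ X k, ∑_{x : (∀ i < k, x i = X i) ∧ x k = X k} exp(−τ·C x) > ∑_{x : (∀ i < k, x i = X i) ∧ x k = j} exp(−τ·C x). (For sufficiently large τ, at every step of the iterative method, conditioned on the correct values of the previously determined variables, the conditional marginal of the imaginary-time amplitudes is uniquely maximized at the value the optimal combination takes, so choosing the largest component at each step recovers the optimum.) -/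
open scoped Classical

/-- For sufficiently large `τ`, at every step of the iterative method, conditioned on the
correct values of the previously determined variables, the conditional marginal of the
imaginary-time amplitudes is uniquely maximized at the value the unique optimal
combination takes. -/
theorem conditional_marginal_maximized_at_optimum
    (N : ℕ) (d : Fin N → ℕ) (hd : ∀ i, 0 < d i)
    (C : (∀ i : Fin N, Fin (d i)) → ℝ)
    (X : ∀ i : Fin N, Fin (d i)) (hmin : ∀ x, x ≠ X → C X < C x) :
    ∃ τ₀ : ℝ, ∀ τ ≥ τ₀, ∀ (k : Fin N) (j : Fin (d k)), j ≠ X k →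
      (∑ x ∈ Finset.univ.filter
          (fun x : ∀ i : Fin N, Fin (d i) => (∀ i < k, x i = X i) ∧ x k = X k),
            Real.exp (-τ * C x))
      > ∑ x ∈ Finset.univ.filter
          (fun x : ∀ i : Fin N, Fin (d i) => (∀ i < k, x i = X i) ∧ x k = j),
            Real.exp (-τ * C x) := by
  classical
  -- X belongs to the "correct" filter set for every k
  have hXA : ∀ k : Fin N, X ∈ Finset.univ.filter
      (fun x : ∀ i : Fin N, Fin (d i) => (∀ i < k, x i = X i) ∧ x k = X k) := by
    intro k; simp
  by_cases hS : ∃ x, x ≠ X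
  · obtain ⟨x₀, hx₀⟩ := hS
    set S : Finset (∀ i : Fin N, Fin (d i)) := Finset.univ.filter (fun x => x ≠ X) with hSdef
    have hSne : S.Nonempty := ⟨x₀, by simp [hSdef, hx₀]⟩
    set T := S.image (fun x => C x - C X) with hT
    have hTne : T.Nonempty := hSne.image _
    set ε := T.min' hTne with hεdef
    have hεpos : 0 < ε := by
      obtain ⟨x, hx, hxe⟩ := Finset.mem_image.mp (T.min'_mem hTne)
      have hxne : x ≠ X := by simpa [hSdef] using hx
      have := hmin x hxne
      rw [hεdef, ← hxe]; linarith
    have hgap : ∀ x, x ≠ X → C X + ε ≤ C x := by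
      intro x hx
      have hmem : C x - C X ∈ T := Finset.mem_image.mpr ⟨x, by simp [hSdef, hx], rfl⟩
      have := T.min'_le _ hmem
      linarith
    set M : ℝ := (Fintype.card (∀ i : Fin N, Fin (d i)) : ℝ) with hM
    have hM1 : 1 ≤ M := by
      have h : 1 ≤ Fintype.card (∀ i : Fin N, Fin (d i)) := Fintype.card_pos_iff.mpr ⟨X⟩
      rw [hM]; exact_mod_cast h
    refine ⟨max ((Real.log M + 1) / ε) 0, ?_⟩
    intro τ hτ k j hj
    have hτ0 : 0 ≤ τ := le_trans (le_max_right _ _) hτ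
    have hτε : Real.log M + 1 ≤ τ * ε := by
      have h1 : (Real.log M + 1) / ε ≤ τ := le_trans (le_max_left _ _) hτ
      calc Real.log M + 1 = ((Real.log M + 1) / ε) * ε := by field_simp
        _ ≤ τ * ε := by nlinarith
    set A := Finset.univ.filter
      (fun x : ∀ i : Fin N, Fin (d i) => (∀ i < k, x i = X i) ∧ x k = X k) with hA
    set B := Finset.univ.filter
      (fun x : ∀ i : Fin N, Fin (d i) => (∀ i < k, x i = X i) ∧ x k = j) with hB
    have hLHS : Real.exp (-τ * C X) ≤ ∑ x ∈ A, Real.exp (-τ * C x) := by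
      exact Finset.single_le_sum (f := fun x => Real.exp (-τ * C x))
        (fun x _ => (Real.exp_pos _).le) (hXA k)
    have hRHS : ∑ x ∈ B, Real.exp (-τ * C x) ≤ M * Real.exp (-τ * (C X + ε)) := by
      have hbound : ∀ x ∈ B, Real.exp (-τ * C x) ≤ Real.exp (-τ * (C X + ε)) := by
        intro x hx
        have hxne : x ≠ X := by
          intro h
          apply hj
          have : x k = j := (Finset.mem_filter.mp hx).2.2
          rw [h] at this; exact this.symm
        have := hgap x hxne
        apply Real.exp_le_exp.mpr
        nlinarith
      calc ∑ x ∈ B, Real.exp (-τ * C x) ≤ ∑ _x ∈ B, Real.exp (-τ * (C X + ε)) :=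
            Finset.sum_le_sum hbound
        _ = (B.card : ℝ) * Real.exp (-τ * (C X + ε)) := by
            rw [Finset.sum_const, nsmul_eq_mul]
        _ ≤ M * Real.exp (-τ * (C X + ε)) := by
            have hc : (B.card : ℝ) ≤ M := by
              rw [hM]; exact_mod_cast Finset.card_le_univ B
            exact mul_le_mul_of_nonneg_right hc (Real.exp_pos _).le
    have hkey : M * Real.exp (-τ * (C X + ε)) < Real.exp (-τ * C X) := by
      have h1 : M * Real.exp (-τ * ε) < 1 := by
        have hlt : Real.log M < τ * ε := by linarith
        have : M < Real.exp (τ * ε) := by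
          calc M = Real.exp (Real.log M) := (Real.exp_log (by linarith)).symm
            _ < Real.exp (τ * ε) := Real.exp_lt_exp.mpr hlt
        have hpos := Real.exp_pos (-τ * ε)
        calc M * Real.exp (-τ * ε) < Real.exp (τ * ε) * Real.exp (-τ * ε) := by
              nlinarith
          _ = 1 := by rw [← Real.exp_add]; norm_num
      calc M * Real.exp (-τ * (C X + ε))
          = (M * Real.exp (-τ * ε)) * Real.exp (-τ * C X) := by
            rw [show -τ * (C X + ε) = -τ * ε + -τ * C X by ring, Real.exp_add, mul_assoc]
        _ < 1 * Real.exp (-τ * C X) := by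
            exact mul_lt_mul_of_pos_right h1 (Real.exp_pos _)
        _ = Real.exp (-τ * C X) := one_mul _
    calc ∑ x ∈ B, Real.exp (-τ * C x) ≤ M * Real.exp (-τ * (C X + ε)) := hRHS
      _ < Real.exp (-τ * C X) := hkey
      _ ≤ ∑ x ∈ A, Real.exp (-τ * C x) := hLHS
  · push_neg at hS
    refine ⟨0, ?_⟩
    intro τ _ k j hj
    have hB : Finset.univ.filter
        (fun x : ∀ i : Fin N, Fin (d i) => (∀ i < k, x i = X i) ∧ x k = j) = ∅ := by
      apply Finset.filter_false_of_mem
      intro x _ hx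
      have h2 := hx.2
      rw [hS x] at h2
      exact hj h2.symm
    rw [hB, Finset.sum_empty]
    have := Finset.single_le_sum (f := fun x => Real.exp (-τ * C x))
      (fun x _ => (Real.exp_pos _).le) (hXA k)
    have := Real.exp_pos (-τ * C X)
    linarith
end

section
/- Let N be a positive natural number and C : (Fin N → Bool) → ℝ a cost function with a unique global minimizer X, i.e. C X < C x for all x ≠ X. Define g : Bool → ℝ by g true = 1 and g false = −1. Then there exists τ₀ ∈ ℝ such that for all τ ≥ τ₀ and all n : Fin N, X n = true if and only if Ω_n(τ) > 0, where Ω_n(τ) = ∑_{x : (∀ i < n, x i = X i)} g (x n) · exp(−τ·C x). (For sufficiently large finite τ, every bit of the optimal combination is given exactly by a Heaviside step function applied to the signed conditional sum of imaginary-time amplitudes.) -/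
open scoped Classical

/-- For sufficiently large finite `τ`, every bit of the unique optimal combination of a
binary optimization problem is given exactly by a Heaviside step applied to the signed
conditional sum of imaginary-time amplitudes
`Ω_n(τ) = ∑_{x, ∀ i < n, x i = X i} g (x n) · exp(−τ·C x)`, where `g` is the Minus
Vector (`g true = 1`, `g false = −1`). -/
theorem optimal_bits_by_heaviside_of_signed_sum
    (N : ℕ) (hN : 0 < N)
    (C : (Fin N → Bool) → ℝ)
    (X : Fin N → Bool) (hmin : ∀ x, x ≠ X → C X < C x)
    (g : Bool → ℝ) (hgt : g true = 1) (hgf : g false = -1) :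
    ∃ τ₀ : ℝ, ∀ τ ≥ τ₀, ∀ n : Fin N,
      (X n = true ↔
        0 < ∑ x ∈ Finset.univ.filter (fun x : Fin N → Bool => ∀ i < n, x i = X i),
              g (x n) * Real.exp (-τ * C x)) := by
  classical
  set x₀ : Fin N → Bool := Function.update X ⟨0, hN⟩ (!X ⟨0, hN⟩) with hx₀
  have hx₀ne : x₀ ≠ X := by
    intro h
    have := congrFun h ⟨0, hN⟩
    simp [hx₀] at this
  set T : Finset (Fin N → Bool) := Finset.univ.filter (fun x => x ≠ X) with hT
  have hTne : T.Nonempty := ⟨x₀, by simp [hT, hx₀ne]⟩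
  set m : ℝ := T.inf' hTne C with hm
  have hmlt : C X < m := by
    rw [hm, Finset.lt_inf'_iff]
    intro b hb
    exact hmin b (by simpa [hT] using hb)
  set K : ℝ := (Fintype.card (Fin N → Bool) : ℝ) with hK
  have hK1 : (1 : ℝ) ≤ K := by
    rw [hK]
    exact_mod_cast Fintype.card_pos
  have hK0 : (0 : ℝ) < K := lt_of_lt_of_le one_pos hK1
  refine ⟨max 1 ((Real.log K + 1) / (m - C X)), fun τ hτ n => ?_⟩
  have hτ1 : (1 : ℝ) ≤ τ := le_trans (le_max_left _ _) hτ
  have hτ0 : (0 : ℝ) ≤ τ := le_trans zero_le_one hτ1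
  have hsub : (0 : ℝ) < m - C X := sub_pos.mpr hmlt
  have hτ2 : Real.log K + 1 ≤ τ * (m - C X) := by
    have := le_trans (le_max_right 1 ((Real.log K + 1) / (m - C X))) hτ
    calc Real.log K + 1 = ((Real.log K + 1) / (m - C X)) * (m - C X) := by
          field_simp
      _ ≤ τ * (m - C X) := by
          exact mul_le_mul_of_nonneg_right this (le_of_lt hsub)
  have hkey : K * Real.exp (-τ * m) < Real.exp (-τ * C X) := by
    rw [← Real.exp_log hK0, ← Real.exp_add]
    apply Real.exp_lt_exp.mpr
    nlinarith [Real.log K]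
  set S : Finset (Fin N → Bool) :=
    Finset.univ.filter (fun x : Fin N → Bool => ∀ i < n, x i = X i) with hS
  have hXS : X ∈ S := by simp [hS]
  set f : (Fin N → Bool) → ℝ := fun x => g (x n) * Real.exp (-τ * C x) with hf
  have hsplit : ∑ x ∈ S, f x = (∑ x ∈ S.erase X, f x) + f X :=
    (Finset.sum_erase_add S f hXS).symm
  set A : ℝ := ∑ x ∈ S.erase X, f x with hA
  have hAbound : |A| < Real.exp (-τ * C X) := by
    have h1 : |A| ≤ ∑ x ∈ S.erase X, |f x| := Finset.abs_sum_le_sum_abs _ _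
    have h2 : ∀ x ∈ S.erase X, |f x| ≤ Real.exp (-τ * m) := by
      intro x hx
      have hxne : x ≠ X := Finset.ne_of_mem_erase hx
      have hmle : m ≤ C x := Finset.inf'_le C (by simp [hT, hxne])
      have habs : |g (x n)| = 1 := by cases h : x n <;> simp [hgt, hgf]
      rw [hf]
      rw [abs_mul, habs, one_mul, abs_of_pos (Real.exp_pos _)]
      apply Real.exp_le_exp.mpr
      nlinarith
    have h3 : ∑ x ∈ S.erase X, |f x| ≤ (S.erase X).card * Real.exp (-τ * m) := by
      calc ∑ x ∈ S.erase X, |f x| ≤ ∑ _x ∈ S.erase X, Real.exp (-τ * m) :=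
            Finset.sum_le_sum h2
        _ = (S.erase X).card * Real.exp (-τ * m) := by
            rw [Finset.sum_const, nsmul_eq_mul]
    have h4 : ((S.erase X).card : ℝ) ≤ K := by
      rw [hK]
      exact_mod_cast Finset.card_le_univ _
    have h5 : ((S.erase X).card : ℝ) * Real.exp (-τ * m) ≤ K * Real.exp (-τ * m) :=
      mul_le_mul_of_nonneg_right h4 (le_of_lt (Real.exp_pos _))
    linarith
  have habsA := abs_lt.mp hAbound
  rw [hsplit]
  constructor
  · intro h
    rw [hf]
    simp only [h, hgt, one_mul]
    linarith [habsA.1]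
  · intro h
    by_contra hc
    have hXn : X n = false := by
      cases hx : X n
      · rfl
      · exact absurd hx hc
    rw [hf] at h
    simp only [hXn, hgf, neg_one_mul] at h
    linarith [habsA.2]
end

section
/- Let N be a natural number with N ≥ 1 and x : Fin N → Bool. Define M : Bool → Matrix (Fin 2) (Fin 2) ℝ by: M false is the identity matrix, and M true has entry 1 in position (0,1) and 0 elsewhere. Define the final vector w : Bool → (Fin 2 → ℝ) by w y 0 = (if y = true then 1 else 0) and w y 1 = (if y = false then 1 else 0). Then the scalar obtained by multiplying the row vector e₀ = (1,0) by the ordered matrix product M (x 0) · M (x 1) · ⋯ · M (x (N−2)) and pairing with the column vector w (x (N−1)) equals 1 if exactly one of the bits x 0, …, x (N−1) is true, and equals 0 otherwise. -/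
theorem aux_single_one
    (M : Bool → Matrix (Fin 2) (Fin 2) ℝ)
    (hMf : M false = 1)
    (hMt : M true = !![0, 1; 0, 0])
    (w : Bool → Fin 2 → ℝ)
    (hw : ∀ y, w y = ![if y = true then 1 else 0, if y = false then 1 else 0])
    (n : ℕ) (x : Fin (n+1) → Bool) :
    ((List.ofFn (fun i : Fin n => M (x i.castSucc))).prod.mulVec (w (x (Fin.last n)))) 0
      = (if (∑ i, if x i = true then 1 else 0 : ℕ) = 1 then 1 else 0) ∧
    ((List.ofFn (fun i : Fin n => M (x i.castSucc))).prod.mulVec (w (x (Fin.last n)))) 1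
      = (if (∑ i, if x i = true then 1 else 0 : ℕ) = 0 then 1 else 0) := by
  induction n with
  | zero =>
      have hs : (∑ i : Fin 1, if x i = true then 1 else 0 : ℕ)
          = if x 0 = true then 1 else 0 := Fin.sum_univ_one _
      have hl : (Fin.last 0) = (0 : Fin 1) := rfl
      rw [List.ofFn_zero, List.prod_nil, Matrix.one_mulVec, hs, hl]
      cases h : x 0 <;> simp only [hw, h] <;> norm_num
  | succ n ih =>
      obtain ⟨h0, h1⟩ := ih (x ∘ Fin.succ)
      have hprod : (List.ofFn (fun i : Fin (n+1) => M (x i.castSucc))).prod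
          = M (x 0) * (List.ofFn (fun i : Fin n => M ((x ∘ Fin.succ) i.castSucc))).prod := by
        rw [List.ofFn_succ, List.prod_cons]
        congr 1
      have hlast : x (Fin.last (n+1)) = (x ∘ Fin.succ) (Fin.last n) := by
        simp [Fin.succ_last]
      have hsum : (∑ i, if x i = true then 1 else 0 : ℕ)
          = (if x 0 = true then 1 else 0) + ∑ i, (if (x ∘ Fin.succ) i = true then 1 else 0 : ℕ) := by
        rw [Fin.sum_univ_succ]; rfl
      set S := (∑ i, if (x ∘ Fin.succ) i = true then 1 else 0 : ℕ) with hS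
      set P := (List.ofFn (fun i : Fin n => M ((x ∘ Fin.succ) i.castSucc))).prod with hP
      rw [hprod, hlast, ← Matrix.mulVec_mulVec, hsum]
      set u := P.mulVec (w ((x ∘ Fin.succ) (Fin.last n))) with hu
      cases h : x 0 with
      | false =>
          rw [hMf, Matrix.one_mulVec]
          have : ((if (false:Bool) = true then 1 else 0) + S : ℕ) = S := by norm_num
          rw [this]
          exact ⟨h0, h1⟩
      | true =>
          have e0 : (M true).mulVec u 0 = u 1 := by
            simp [hMt, Matrix.mulVec, dotProduct, Fin.sum_univ_two]
          have e1 : (M true).mulVec u 1 = 0 := by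
            simp [hMt, Matrix.mulVec, dotProduct, Fin.sum_univ_two]
          have hc : ((if (true:Bool) = true then 1 else 0) + S : ℕ) = 1 + S := by norm_num
          rw [e0, e1, h1, hc]
          constructor
          · congr 1
            exact propext (by omega)
          · rw [if_neg (by omega)]

/-- Contraction of the Tensor Logical Circuit for the Single One Input problem: with
transfer matrices `M false = 1` (identity) and `M true = E₀₁`, and final vector
`w y = (⟦y = true⟧, ⟦y = false⟧)`, the scalar
`e₀ᵀ · M (x 0) · ⋯ · M (x (N−2)) · w (x (N−1))` equals `1` if exactly one bit of `x` is
`true` and `0` otherwise. -/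
theorem single_one_input_contraction
    (N : ℕ) (hN : 1 ≤ N) (x : Fin N → Bool)
    (M : Bool → Matrix (Fin 2) (Fin 2) ℝ)
    (hMf : M false = 1)
    (hMt : M true = !![0, 1; 0, 0])
    (w : Bool → Fin 2 → ℝ)
    (hw : ∀ y, w y = ![if y = true then 1 else 0, if y = false then 1 else 0]) :
    ((List.ofFn (fun i : Fin (N - 1) => M (x (Fin.castLE (Nat.sub_le N 1) i)))).prod.mulVec
        (w (x ⟨N - 1, by omega⟩))) 0
      = if (Finset.univ.filter (fun i : Fin N => x i = true)).card = 1 then 1 else 0 := by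
  obtain ⟨n, rfl⟩ : ∃ n, N = n + 1 := ⟨N - 1, by omega⟩
  have hcard : (Finset.univ.filter (fun i : Fin (n+1) => x i = true)).card
      = ∑ i, if x i = true then 1 else 0 := by
    rw [Finset.card_filter]
  rw [hcard]
  exact (aux_single_one M hMf hMt w hw n x).1
end

section
/- Let N, d be natural numbers with d ≥ 1, a : Fin d a fixed value, m a natural number with m ≥ 0, and x : Fin N → Fin d. Define M : Fin d → Matrix (Fin (m+1)) (Fin (m+1)) ℝ by M v j ν = 1 if (ν : ℕ) = (j : ℕ) + (if v = a then 1 else 0), and M v j ν = 0 otherwise. Then the scalar e₀ᵀ · (M (x 0) · M (x 1) · ⋯ · M (x (N−1))) · e_m, where e₀ and e_m are the standard basis vectors of ℝ^(m+1) at positions 0 and m, equals 1 if the number of indices i with x i = a is exactly m, and equals 0 otherwise. (The single repetition filter layer annihilates exactly those combinations in which the value a does not appear exactly m times.) -/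
/-- Transfer matrix moving the counting signal `j` to `j + k`; a signal pushed past `n - 1`
is annihilated. -/
def shiftMatrix (R : Type*) [Zero R] [One R] (n k : ℕ) : Matrix (Fin n) (Fin n) R :=
  Matrix.of fun j ν => if (ν : ℕ) = j + k then 1 else 0

section ShiftMatrix

variable {R : Type*} [NonAssocSemiring R] {n : ℕ}

@[simp]
theorem shiftMatrix_apply (k : ℕ) (j ν : Fin n) :
    shiftMatrix R n k j ν = if (ν : ℕ) = j + k then 1 else 0 :=
  rfl

@[simp]
theorem shiftMatrix_zero : shiftMatrix R n 0 = 1 := by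
  ext j ν
  simp [Matrix.one_apply, Fin.ext_iff, eq_comm]

theorem shiftMatrix_mul_shiftMatrix (k l : ℕ) :
    shiftMatrix R n k * shiftMatrix R n l = shiftMatrix R n (k + l) := by
  ext j ν
  rw [Matrix.mul_apply]
  by_cases hjk : (j : ℕ) + k < n
  · rw [Finset.sum_eq_single ⟨j + k, hjk⟩ (fun i _ hi => by
        simp only [ne_eq, Fin.ext_iff, shiftMatrix_apply, mul_ite, mul_one, mul_zero,
          ite_eq_right_iff] at hi ⊢
        omega)
      (by simp)]
    simp [add_assoc]
  · -- the intermediate signal `j + k` already overflows, so every summand vanishes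
    have hν := ν.isLt
    rw [Finset.sum_eq_zero fun i _ => by
      have := i.isLt
      simp only [shiftMatrix_apply, mul_ite, mul_one, mul_zero, ite_eq_right_iff]
      omega]
    simp only [shiftMatrix_apply]
    rw [if_neg (by omega)]

theorem prod_ofFn_shiftMatrix {N : ℕ} (f : Fin N → ℕ) :
    (List.ofFn fun i => shiftMatrix R n (f i)).prod = shiftMatrix R n (∑ i, f i) := by
  induction N with
  | zero => simp
  | succ N ih =>
    rw [List.ofFn_succ, List.prod_cons, ih, shiftMatrix_mul_shiftMatrix, Fin.sum_univ_succ]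

end ShiftMatrix

theorem single_repetition_layer_contraction_general
    (N d : ℕ) (a : Fin d) (m : ℕ) (x : Fin N → Fin d)
    (M : Fin d → Matrix (Fin (m + 1)) (Fin (m + 1)) ℝ)
    (hM : ∀ (v : Fin d) (j ν : Fin (m + 1)),
      M v j ν = if (ν : ℕ) = (j : ℕ) + (if v = a then 1 else 0) then 1 else 0) :
    (List.ofFn (fun i : Fin N => M (x i))).prod ⟨0, Nat.succ_pos m⟩ (Fin.last m)
      = if (Finset.univ.filter (fun i : Fin N => x i = a)).card = m then 1 else 0 := by
  have hM_shift : M = fun v => shiftMatrix ℝ (m + 1) (if v = a then 1 else 0) := by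
    ext v j ν
    exact hM v j ν
  rw [hM_shift, prod_ofFn_shiftMatrix, ← Finset.card_filter]
  simp [eq_comm]

/-- The single repetition filter layer annihilates exactly those combinations in which the
value `a` does not appear exactly `m` times: with transfer matrices
`M v j ν = ⟦ν = j + ⟦v = a⟧⟧` on the counting signal space `Fin (m+1)`, the scalar
`e₀ᵀ · M (x 0) · ⋯ · M (x (N−1)) · e_m` equals `1` if `#{i | x i = a} = m` and `0`
otherwise. -/
theorem single_repetition_layer_contraction
    (N d : ℕ) (hd : 1 ≤ d) (a : Fin d) (m : ℕ) (hm : 0 ≤ m) (x : Fin N → Fin d)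
    (M : Fin d → Matrix (Fin (m + 1)) (Fin (m + 1)) ℝ)
    (hM : ∀ (v : Fin d) (j ν : Fin (m + 1)),
      M v j ν = if (ν : ℕ) = (j : ℕ) + (if v = a then 1 else 0) then 1 else 0) :
    (List.ofFn (fun i : Fin N => M (x i))).prod ⟨0, Nat.succ_pos m⟩ (Fin.last m)
      = if (Finset.univ.filter (fun i : Fin N => x i = a)).card = m then 1 else 0 :=
  single_repetition_layer_contraction_general N d a m x M hM
end
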